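/- Assume φ: A → A is surjective. Let (M, α_M) →^i (K, α_K) →^σ (L, α_L) be a central extension of hom-Lie-Rinehart algebras over (A, φ) with (K, α_K) perfect, and let (N, α_N) →^j (L', α_{L'}) →^τ (K, α_K) be a central extension of (K, α_K). Then the composition Ker(σ∘τ) → (L', α_{L'}) →^{σ∘τ} (L, α_L) is an α-central extension of (L, α_L). -/

import Mathlib

open TensorProduct Function Set

/-- A hom-Lie-Rinehart algebra structure over `(A, φ)` on the `A`-module `L`. -/
structure HLR (R A : Type) [CommRing R] [CommRing A] [Algebra R A]
    (φ : A →ₐ[R] A) (L : Type) [AddCommGroup L] [Module R L]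
    [Module A L] [IsScalarTower R A L] : Type where
  bracket : L → L → L
  add_left : ∀ x y z, bracket (x + y) z = bracket x z + bracket y z
  add_right : ∀ x y z, bracket x (y + z) = bracket x y + bracket x z
  smul_left : ∀ (r : R) (x y : L), bracket (r • x) y = r • bracket x y
  smul_right : ∀ (r : R) (x y : L), bracket x (r • y) = r • bracket x y
  skew : ∀ x y, bracket x y = - bracket y x
  alpha : L → L
  alpha_add : ∀ x y, alpha (x + y) = alpha x + alpha y
  alpha_smulR : ∀ (r : R) (x : L), alpha (r • x) = r • alpha x
  rho : L → A → A
  rho_add_left : ∀ x y a, rho (x + y) a = rho x a + rho y a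
  rho_smulR_left : ∀ (r : R) (x : L) (a : A), rho (r • x) a = r • rho x a
  rho_add_right : ∀ (x : L) (a b : A), rho x (a + b) = rho x a + rho x b
  rho_smulR_right : ∀ (x : L) (r : R) (a : A), rho x (r • a) = r • rho x a
  rho_deriv : ∀ (x : L) (a b : A), rho x (a * b) = φ a * rho x b + φ b * rho x a
  alpha_bracket : ∀ x y, alpha (bracket x y) = bracket (alpha x) (alpha y)
  hom_jacobi : ∀ x y z, bracket (alpha x) (bracket y z)
      + bracket (alpha y) (bracket z x) + bracket (alpha z) (bracket x y) = 0
  alpha_smulA : ∀ (a : A) (x : L), alpha (a • x) = φ a • alpha x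
  rho_alpha : ∀ (x : L) (a : A), rho (alpha x) (φ a) = φ (rho x a)
  rho_bracket : ∀ (x y : L) (a : A), rho (bracket x y) (φ a)
      = rho (alpha x) (rho y a) - rho (alpha y) (rho x a)
  rho_smulA : ∀ (a : A) (x : L) (b : A), rho (a • x) b = φ a * rho x b
  leibniz : ∀ (x : L) (a : A) (y : L),
      bracket x (a • y) = φ a • bracket x y + rho x a • alpha y

section Defs

variable {R A : Type} [CommRing R] [CommRing A] [Algebra R A] {φ : A →ₐ[R] A}

/-- Homomorphism of hom-Lie-Rinehart algebras over `(A, φ)`: an `A`-linear map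
preserving brackets, the twist maps and the anchors. -/
def IsHLRHom {K L : Type}
    [AddCommGroup K] [Module R K] [Module A K] [IsScalarTower R A K]
    [AddCommGroup L] [Module R L] [Module A L] [IsScalarTower R A L]
    (SK : HLR R A φ K) (SL : HLR R A φ L) (f : K → L) : Prop :=
  (∀ x y, f (x + y) = f x + f y) ∧
  (∀ (a : A) (x : K), f (a • x) = a • f x) ∧
  (∀ x y, f (SK.bracket x y) = SL.bracket (f x) (f y)) ∧
  (∀ x, f (SK.alpha x) = SL.alpha (f x)) ∧
  (∀ (x : K) (a : A), SL.rho (f x) a = SK.rho x a)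

/-- The center `Z_A(L)` of a hom-Lie-Rinehart algebra. -/
def HLR.center {L : Type}
    [AddCommGroup L] [Module R L] [Module A L] [IsScalarTower R A L]
    (S : HLR R A φ L) : Set L :=
  {x | ∀ (a : A) (z : L),
    S.bracket (a • x) z = 0 ∧ S.bracket (a • S.alpha x) z = 0 ∧ S.rho x a = 0}

/-- `(M, i) → (K, σ)` is a central extension of `L`. -/
def IsCentralExt {M K L : Type}
    [AddCommGroup M] [Module R M] [Module A M] [IsScalarTower R A M]
    [AddCommGroup K] [Module R K] [Module A K] [IsScalarTower R A K]
    [AddCommGroup L] [Module R L] [Module A L] [IsScalarTower R A L]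
    (SM : HLR R A φ M) (SK : HLR R A φ K) (SL : HLR R A φ L)
    (i : M → K) (σ : K → L) : Prop :=
  IsHLRHom SM SK i ∧ IsHLRHom SK SL σ ∧ Function.Injective i ∧
  Function.Surjective σ ∧ Set.range i = {k | σ k = 0} ∧
  {k | σ k = 0} ⊆ SK.center

/-- `(M, i) → (K, σ)` is an `α`-central extension of `L`. -/
def IsAlphaCentralExt {M K L : Type}
    [AddCommGroup M] [Module R M] [Module A M] [IsScalarTower R A M]
    [AddCommGroup K] [Module R K] [Module A K] [IsScalarTower R A K]
    [AddCommGroup L] [Module R L] [Module A L] [IsScalarTower R A L]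
    (SM : HLR R A φ M) (SK : HLR R A φ K) (SL : HLR R A φ L)
    (i : M → K) (σ : K → L) : Prop :=
  IsHLRHom SM SK i ∧ IsHLRHom SK SL σ ∧ Function.Injective i ∧
  Function.Surjective σ ∧ Set.range i = {k | σ k = 0} ∧
  (∀ m : M, i (SM.alpha m) ∈ SK.center)

/-- A hom-Lie-Rinehart algebra is perfect if `L = {L, L}`, the `A`-submodule
generated by all brackets. -/
def HLR.IsPerfect {L : Type}
    [AddCommGroup L] [Module R L] [Module A L] [IsScalarTower R A L]
    (S : HLR R A φ L) : Prop :=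
  Submodule.span A {z : L | ∃ x y, z = S.bracket x y} = ⊤

/-- A hom-Lie-Rinehart algebra is `α`-perfect if `L = {α_L(L), α_L(L)}`. -/
def HLR.IsAlphaPerfect {L : Type}
    [AddCommGroup L] [Module R L] [Module A L] [IsScalarTower R A L]
    (S : HLR R A φ L) : Prop :=
  Submodule.span A {z : L | ∃ x y, z = S.bracket (S.alpha x) (S.alpha y)} = ⊤

/-- Universal central extension. -/
def IsUniversalCentralExt {M K L : Type}
    [AddCommGroup M] [Module R M] [Module A M] [IsScalarTower R A M]
    [AddCommGroup K] [Module R K] [Module A K] [IsScalarTower R A K]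
    [AddCommGroup L] [Module R L] [Module A L] [IsScalarTower R A L]
    (SM : HLR R A φ M) (SK : HLR R A φ K) (SL : HLR R A φ L)
    (i : M → K) (σ : K → L) : Prop :=
  IsCentralExt SM SK SL i σ ∧
  ∀ (M' L' : Type)
    [AddCommGroup M'] [Module R M'] [Module A M'] [IsScalarTower R A M']
    [AddCommGroup L'] [Module R L'] [Module A L'] [IsScalarTower R A L']
    (SM' : HLR R A φ M') (SL' : HLR R A φ L') (j : M' → L') (τ : L' → L),
    IsCentralExt SM' SL' SL j τ →
    ∃! h : K → L', IsHLRHom SK SL' h ∧ ∀ x, τ (h x) = σ x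

/-- Universal `α`-central extension. -/
def IsUniversalAlphaCentralExt {M K L : Type}
    [AddCommGroup M] [Module R M] [Module A M] [IsScalarTower R A M]
    [AddCommGroup K] [Module R K] [Module A K] [IsScalarTower R A K]
    [AddCommGroup L] [Module R L] [Module A L] [IsScalarTower R A L]
    (SM : HLR R A φ M) (SK : HLR R A φ K) (SL : HLR R A φ L)
    (i : M → K) (σ : K → L) : Prop :=
  IsCentralExt SM SK SL i σ ∧
  ∀ (M' L' : Type)
    [AddCommGroup M'] [Module R M'] [Module A M'] [IsScalarTower R A M']
    [AddCommGroup L'] [Module R L'] [Module A L'] [IsScalarTower R A L']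
    (SM' : HLR R A φ M') (SL' : HLR R A φ L') (j : M' → L') (τ : L' → L),
    IsAlphaCentralExt SM' SL' SL j τ →
    ∃! h : K → L', IsHLRHom SK SL' h ∧ ∀ x, τ (h x) = σ x

end Defs

section UceDefs

variable {R A : Type} [CommRing R] [CommRing A] [Algebra R A] (φ : A →ₐ[R] A)
variable {L : Type} [AddCommGroup L] [Module R L] [Module A L] [IsScalarTower R A L]

/-- The `A`-submodule `M^φ_A L` of `A ⊗ L ⊗ L` of defining relations of `uce^φ_A L`. -/
def uceRel (S : HLR R A φ L) : Submodule A (A ⊗[R] (L ⊗[R] L)) :=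
  Submodule.span A
    ({t | ∃ (a : A) (x : L), t = a ⊗ₜ[R] (x ⊗ₜ[R] x)} ∪
     {t | ∃ (a : A) (x y : L), t = a ⊗ₜ[R] (x ⊗ₜ[R] y) + a ⊗ₜ[R] (y ⊗ₜ[R] x)} ∪
     {t | ∃ (a : A) (x y z : L), t =
        a ⊗ₜ[R] (S.alpha x ⊗ₜ[R] S.bracket y z)
          + a ⊗ₜ[R] (S.alpha y ⊗ₜ[R] S.bracket z x)
          + a ⊗ₜ[R] (S.alpha z ⊗ₜ[R] S.bracket x y)} ∪
     {t | ∃ (a : A) (x y x' y' : L), t =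
        φ a ⊗ₜ[R] (S.bracket x y ⊗ₜ[R] S.bracket x' y')
          + S.rho (S.bracket x y) a ⊗ₜ[R] (S.alpha x' ⊗ₜ[R] S.alpha y')
          - (1 : A) ⊗ₜ[R] (S.bracket x y ⊗ₜ[R] (a • S.bracket x' y'))})

/-- The underlying `A`-module of `uce^φ_A L`. -/
abbrev UCE (S : HLR R A φ L) : Type := (A ⊗[R] (L ⊗[R] L)) ⧸ uceRel φ S

/-- The coset `(a, x, y)` in `uce^φ_A L`. -/
noncomputable def uceMk (S : HLR R A φ L) (a : A) (x y : L) : UCE φ S :=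
  Submodule.Quotient.mk (a ⊗ₜ[R] (x ⊗ₜ[R] y))

/-- `U` is the hom-Lie-Rinehart structure of `uce^φ_A L`: its bracket, twist map and anchor
are given by the defining formulas on cosets. -/
def IsUceStructure (S : HLR R A φ L) (U : HLR R A φ (UCE φ S)) : Prop :=
  (∀ (a₁ a₂ : A) (x₁ y₁ x₂ y₂ : L),
    U.bracket (uceMk φ S a₁ x₁ y₁) (uceMk φ S a₂ x₂ y₂) =
      uceMk φ S (φ (a₁ * a₂)) (S.bracket x₁ y₁) (S.bracket x₂ y₂)
      + uceMk φ S (φ a₁ * S.rho (S.bracket x₁ y₁) a₂) (S.alpha x₂) (S.alpha y₂)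
      - uceMk φ S (φ a₂ * S.rho (S.bracket x₂ y₂) a₁) (S.alpha x₁) (S.alpha y₁)) ∧
  (∀ (a : A) (x y : L),
    U.alpha (uceMk φ S a x y) = uceMk φ S (φ a) (S.alpha x) (S.alpha y)) ∧
  (∀ (a b : A) (x y : L),
    U.rho (uceMk φ S a x y) b = φ a * S.rho (S.bracket x y) b)

/-- `u` is the canonical map `u_L : uce^φ_A L → L`, `(a,x,y) ↦ a • [x,y]`. -/
def IsUceMap (S : HLR R A φ L) (u : UCE φ S → L) : Prop :=
  (∀ ξ η, u (ξ + η) = u ξ + u η) ∧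
  (∀ (a : A) (ξ : UCE φ S), u (a • ξ) = a • u ξ) ∧
  (∀ (a : A) (x y : L), u (uceMk φ S a x y) = a • S.bracket x y)

end UceDefs

section MoreDefs

variable {R A : Type} [CommRing R] [CommRing A] [Algebra R A] (φ : A →ₐ[R] A)

/-- `F` is the homomorphism `uce^φ_A(f)` induced by `f` on universal central extensions. -/
def IsUceFunctorMap {K L : Type}
    [AddCommGroup K] [Module R K] [Module A K] [IsScalarTower R A K]
    [AddCommGroup L] [Module R L] [Module A L] [IsScalarTower R A L]
    (SK : HLR R A φ K) (SL : HLR R A φ L)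
    (UK : HLR R A φ (UCE φ SK)) (UL : HLR R A φ (UCE φ SL))
    (f : K → L) (F : UCE φ SK → UCE φ SL) : Prop :=
  IsHLRHom UK UL F ∧
  ∀ (a : A) (x y : K), F (uceMk φ SK a x y) = uceMk φ SL a (f x) (f y)

/-- `D` is an `α`-derivation of `(L, α_L)` with symbol `σD`. -/
def IsAlphaDeriv {L : Type}
    [AddCommGroup L] [Module R L] [Module A L] [IsScalarTower R A L]
    (S : HLR R A φ L) (D : L → L) (σD : A → A) : Prop :=
  (∀ x y, D (x + y) = D x + D y) ∧
  (∀ (r : R) (x : L), D (r • x) = r • D x) ∧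
  (∀ a b, σD (a + b) = σD a + σD b) ∧
  (∀ (r : R) (a : A), σD (r • a) = r • σD a) ∧
  (∀ a b, σD (a * b) = φ a * σD b + φ b * σD a) ∧
  (∀ x, D (S.alpha x) = S.alpha (D x)) ∧
  (∀ x y, D (S.bracket x y) = S.bracket (D x) (S.alpha y) + S.bracket (S.alpha x) (D y)) ∧
  (∀ a, σD (φ a) = φ (σD a)) ∧
  (∀ (a : A) (x : L), D (a • x) = φ a • D x + σD a • S.alpha x) ∧
  (∀ (x : L) (a : A), σD (S.rho x a) = S.rho (S.alpha x) (σD a) + S.rho (D x) (φ a))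

/-- A quasi hom-action of `(L, α_L)` on `(M, α_M)`. -/
def IsQuasiHomAction {L M : Type}
    [AddCommGroup L] [Module R L] [Module A L] [IsScalarTower R A L]
    [AddCommGroup M] [Module R M] [Module A M] [IsScalarTower R A M]
    (SL : HLR R A φ L) (SM : HLR R A φ M) (act : L → M → M) : Prop :=
  (∀ (x : L) (a : A) (m : M),
      act x (a • m) = φ a • act x m + SL.rho x a • SM.alpha m) ∧
  (∀ (x y : L) (m : M),
      act (SL.bracket x y) (SM.alpha m)
        = act (SL.alpha x) (act y m) - act (SL.alpha y) (act x m)) ∧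
  (∀ (x : L) (m n : M),
      act (SL.alpha x) (SM.bracket m n)
        = SM.bracket (act x m) (SM.alpha n) + SM.bracket (SM.alpha m) (act x n)) ∧
  (∀ (x : L) (m : M) (a : A),
      SM.rho (act x m) (φ a)
        = SL.rho (SL.alpha x) (SM.rho m a) - SM.rho (SM.alpha m) (SL.rho x a)) ∧
  (∀ (x : L) (m : M), SM.alpha (act x m) = act (SL.alpha x) (SM.alpha m))

/-- Compatibility of two quasi hom-actions on each other. -/
def AreCompatibleActions {L M : Type}
    [AddCommGroup L] [Module R L] [Module A L] [IsScalarTower R A L]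
    [AddCommGroup M] [Module R M] [Module A M] [IsScalarTower R A M]
    (SL : HLR R A φ L) (SM : HLR R A φ M)
    (actLM : L → M → M) (actML : M → L → L) : Prop :=
  (∀ (x : L) (m : M) (a : A), SM.rho (actLM x m) a = - SL.rho (actML m x) a) ∧
  (∀ (m : M) (x : L) (n : M), actLM (actML m x) n = SM.bracket n (actLM x m)) ∧
  (∀ (x : L) (m : M) (y : L), actML (actLM x m) y = SL.bracket y (actML m x))

end MoreDefs

section StarDefs

variable {R A : Type} [CommRing R] [CommRing A] [Algebra R A] (φ : A →ₐ[R] A)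
variable {L M : Type}
  [AddCommGroup L] [Module R L] [Module A L] [IsScalarTower R A L]
  [AddCommGroup M] [Module R M] [Module A M] [IsScalarTower R A M]

/-- The `A`-submodule of defining relations of the non-abelian tensor product `L ∗ M`,
inside the free `A`-module on the symbols `x ∗ m`. -/
noncomputable def starRel (SL : HLR R A φ L) (SM : HLR R A φ M)
    (actLM : L → M → M) (actML : M → L → L) : Submodule A ((L × M) →₀ A) :=
  Submodule.span A
    ({t | ∃ (x y : L) (m : M), t =
        Finsupp.single (x + y, m) (1 : A) - Finsupp.single (x, m) 1
          - Finsupp.single (y, m) 1} ∪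
     {t | ∃ (r : R) (x : L) (m : M), t =
        Finsupp.single (r • x, m) (1 : A) - r • Finsupp.single (x, m) (1 : A)} ∪
     {t | ∃ (x : L) (m n : M), t =
        Finsupp.single (x, m + n) (1 : A) - Finsupp.single (x, m) 1
          - Finsupp.single (x, n) 1} ∪
     {t | ∃ (r : R) (x : L) (m : M), t =
        Finsupp.single (x, r • m) (1 : A) - r • Finsupp.single (x, m) (1 : A)} ∪
     {t | ∃ (x y : L) (m : M), t =
        Finsupp.single (SL.bracket x y, SM.alpha m) (1 : A)
          - Finsupp.single (SL.alpha x, actLM y m) 1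
          + Finsupp.single (SL.alpha y, actLM x m) 1} ∪
     {t | ∃ (x : L) (m n : M), t =
        Finsupp.single (SL.alpha x, SM.bracket m n) (1 : A)
          - Finsupp.single (actML n x, SM.alpha m) 1
          + Finsupp.single (actML m x, SM.alpha n) 1} ∪
     {t | ∃ (a b : A) (x y : L) (m n : M), t =
        Finsupp.single (a • actML m x, b • actLM y n) (1 : A)
          + Finsupp.single (b • actML n y, a • actLM x m) 1} ∪
     {t | ∃ (a b : A) (x y : L) (m n : M), t =
        Finsupp.single (a • actML m x, b • actLM y n) (1 : A)
          - φ (a * b) • Finsupp.single (actML m x, actLM y n) (1 : A)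
          + (φ a * SM.rho (actLM x m) b) • Finsupp.single (SL.alpha y, SM.alpha n) (1 : A)
          - (φ b * SM.rho (actLM y n) a) • Finsupp.single (SL.alpha x, SM.alpha m) (1 : A)})

/-- The underlying `A`-module of the non-abelian tensor product `L ∗ M`. -/
abbrev StarMod (SL : HLR R A φ L) (SM : HLR R A φ M)
    (actLM : L → M → M) (actML : M → L → L) : Type :=
  ((L × M) →₀ A) ⧸ starRel φ SL SM actLM actML

/-- The generator `x ∗ m` of `L ∗ M`. -/
noncomputable def starMk (SL : HLR R A φ L) (SM : HLR R A φ M)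
    (actLM : L → M → M) (actML : M → L → L) (x : L) (m : M) :
    StarMod φ SL SM actLM actML :=
  Submodule.Quotient.mk (Finsupp.single (x, m) (1 : A))

/-- `U` is the hom-Lie-Rinehart structure of the non-abelian tensor product `L ∗ M`. -/
def IsStarStructure (SL : HLR R A φ L) (SM : HLR R A φ M)
    (actLM : L → M → M) (actML : M → L → L)
    (U : HLR R A φ (StarMod φ SL SM actLM actML)) : Prop :=
  (∀ (x : L) (m : M),
      U.alpha (starMk φ SL SM actLM actML x m)
        = starMk φ SL SM actLM actML (SL.alpha x) (SM.alpha m)) ∧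
  (∀ (a b : A) (x y : L) (m n : M),
      U.bracket (a • starMk φ SL SM actLM actML x m)
          (b • starMk φ SL SM actLM actML y n)
        = - starMk φ SL SM actLM actML (a • actML m x) (b • actLM y n)) ∧
  (∀ (x : L) (m : M) (a : A),
      U.rho (starMk φ SL SM actLM actML x m) a = SM.rho (actLM x m) a)

/-- A hom-Lie-Rinehart pairing of `(L, α_L)` and `(M, α_M)` into `(N, α_N)`. -/
def IsHLRPairing {N : Type}
    [AddCommGroup N] [Module R N] [Module A N] [IsScalarTower R A N]
    (SL : HLR R A φ L) (SM : HLR R A φ M) (SN : HLR R A φ N)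
    (actLM : L → M → M) (actML : M → L → L) (f : L → M → N) : Prop :=
  (∀ (x y : L) (m : M), f (x + y) m = f x m + f y m) ∧
  (∀ (r : R) (x : L) (m : M), f (r • x) m = r • f x m) ∧
  (∀ (x : L) (m n : M), f x (m + n) = f x m + f x n) ∧
  (∀ (r : R) (x : L) (m : M), f x (r • m) = r • f x m) ∧
  (∀ (x : L) (m : M) (a : A), SN.rho (f x m) a = SM.rho (actLM x m) a) ∧
  (∀ (x y : L) (m : M),
      f (SL.bracket x y) (SM.alpha m)
        = f (SL.alpha x) (actLM y m) - f (SL.alpha y) (actLM x m)) ∧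
  (∀ (x : L) (m n : M),
      f (SL.alpha x) (SM.bracket m n)
        = f (actML n x) (SM.alpha m) - f (actML m x) (SM.alpha n)) ∧
  (∀ (x : L) (m : M), f (SL.alpha x) (SM.alpha m) = SN.alpha (f x m)) ∧
  (∀ (a b : A) (x y : L) (m n : M),
      f (a • actML m x) (b • actLM y n)
        = - (φ (a * b) • SN.bracket (f x m) (f y n))
          - (φ a * SN.rho (f x m) b) • SN.alpha (f y n)
          + (φ b * SN.rho (f y n) a) • SN.alpha (f x m))

end StarDefs

/-!
For `x` in the kernel of `σ ∘ τ`, the element `τ x` is central in `K`. By hom-Jacobi, `α x` then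
commutes with every bracket of `L'`, because `[z, x]` and `[x, y]` lie in `Ker τ`, which is central
in `L'`. The elements commuting with `α x` form an `A`-submodule (the anchor of `α x` vanishes once
`φ` is surjective) that contains `Ker τ` and all brackets; since `K` is perfect it is all of `L'`.
Surjectivity of `φ` also writes `a • α x` as `α (b • x)`, with `b • x` again in the kernel.
-/

section HLRLemmas

variable {R A : Type} [CommRing R] [CommRing A] [Algebra R A] {φ : A →ₐ[R] A}
  {K L L' : Type}
  [AddCommGroup K] [Module R K] [Module A K] [IsScalarTower R A K]
  [AddCommGroup L] [Module R L] [Module A L] [IsScalarTower R A L]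
  [AddCommGroup L'] [Module R L'] [Module A L'] [IsScalarTower R A L']

namespace HLR

variable (S : HLR R A φ L)

theorem alpha_zero : S.alpha 0 = 0 := by
  simpa using S.alpha_add 0 0

theorem bracket_zero_right (y : L) : S.bracket y 0 = 0 := by
  simpa using S.add_right y 0 0

/-- The Leibniz rule makes the centralizer of `y` closed under `A`-scalars once the anchor of `y`
vanishes. -/
def centralizer (y : L) (hy : ∀ a, S.rho y a = 0) : Submodule A L where
  carrier := {z | S.bracket y z = 0}
  zero_mem' := S.bracket_zero_right y
  add_mem' {z₁ z₂} (h₁ : S.bracket y z₁ = 0) (h₂ : S.bracket y z₂ = 0) := by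
    rw [Set.mem_ofPred_eq, S.add_right, h₁, h₂, add_zero]
  smul_mem' a z (h : S.bracket y z = 0) := by
    rw [Set.mem_ofPred_eq, S.leibniz, h, hy, smul_zero, zero_smul, add_zero]

variable {S}

theorem bracket_eq_zero_of_mem_center_left {x : L} (hx : x ∈ S.center) (z : L) :
    S.bracket x z = 0 := by
  simpa using (hx 1 z).1

theorem bracket_eq_zero_of_mem_center_right {x : L} (hx : x ∈ S.center) (z : L) :
    S.bracket z x = 0 := by
  rw [S.skew, bracket_eq_zero_of_mem_center_left hx, neg_zero]

theorem rho_alpha_eq_zero (hφ : Surjective φ) {w : L} (hw : ∀ a, S.rho w a = 0) (a : A) :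
    S.rho (S.alpha w) a = 0 := by
  obtain ⟨b, rfl⟩ := hφ a
  rw [S.rho_alpha, hw, map_zero]

end HLR

namespace IsHLRHom

variable {SK : HLR R A φ K} {SL : HLR R A φ L} {SL' : HLR R A φ L'}

def toLinearMap {f : K → L} (hf : IsHLRHom SK SL f) : K →ₗ[A] L where
  toFun := f
  map_add' := hf.1
  map_smul' := hf.2.1

theorem comp {f : L' → K} {g : K → L} (hg : IsHLRHom SK SL g) (hf : IsHLRHom SL' SK f) :
    IsHLRHom SL' SL (fun x => g (f x)) := by
  obtain ⟨g_add, g_smul, g_bracket, g_alpha, g_rho⟩ := hg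
  obtain ⟨f_add, f_smul, f_bracket, f_alpha, f_rho⟩ := hf
  refine ⟨fun x y => ?_, fun a x => ?_, fun x y => ?_, fun x => ?_, fun x a => ?_⟩
  · simp only [f_add, g_add]
  · simp only [f_smul, g_smul]
  · simp only [f_bracket, g_bracket]
  · simp only [f_alpha, g_alpha]
  · simp only [g_rho, f_rho]

theorem rho_eq_zero_of_mem_center {f : K → L} (hf : IsHLRHom SK SL f) {x : K}
    (hx : f x ∈ SL.center) (a : A) : SK.rho x a = 0 := by
  rw [← hf.2.2.2.2, (hx a 0).2.2]

variable {τ : L' → K}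

theorem eq_top_of_isPerfect (hτ : IsHLRHom SL' SK τ) (hsurj : Surjective τ)
    (hperf : SK.IsPerfect) {p : Submodule A L'} (hker : ∀ x, τ x = 0 → x ∈ p)
    (hbracket : ∀ x y, SL'.bracket x y ∈ p) : p = ⊤ := by
  have hmap : p.map hτ.toLinearMap = ⊤ := by
    rw [eq_top_iff, ← hperf, Submodule.span_le]
    rintro _ ⟨x, y, rfl⟩
    obtain ⟨u, rfl⟩ := hsurj x
    obtain ⟨v, rfl⟩ := hsurj y
    exact ⟨SL'.bracket u v, hbracket u v, hτ.2.2.1 u v⟩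
  rw [← Submodule.comap_map_eq_self (f := hτ.toLinearMap) (fun x hx => hker x hx), hmap,
    Submodule.comap_top]

theorem bracket_alpha_bracket_eq_zero (hτ : IsHLRHom SL' SK τ)
    (hker : {k | τ k = 0} ⊆ SL'.center) {w : L'} (hw : ∀ k, SK.bracket (τ w) k = 0)
    (y z : L') : SL'.bracket (SL'.alpha w) (SL'.bracket y z) = 0 := by
  have hzw : SL'.bracket z w ∈ SL'.center :=
    hker (show τ _ = 0 by rw [hτ.2.2.1, SK.skew, hw, neg_zero])
  have hwy : SL'.bracket w y ∈ SL'.center := hker (show τ _ = 0 by rw [hτ.2.2.1, hw])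
  have hjacobi := SL'.hom_jacobi w y z
  rwa [HLR.bracket_eq_zero_of_mem_center_right hzw, HLR.bracket_eq_zero_of_mem_center_right hwy,
    add_zero, add_zero] at hjacobi

end IsHLRHom

theorem IsCentralExt.bracket_alpha_eq_zero {N : Type}
    [AddCommGroup N] [Module R N] [Module A N] [IsScalarTower R A N]
    {SN : HLR R A φ N} {SL' : HLR R A φ L'} {SK : HLR R A φ K} {j : N → L'} {τ : L' → K}
    (hφ : Surjective φ) (h : IsCentralExt SN SL' SK j τ) (hperf : SK.IsPerfect) {w : L'}
    (hw : τ w ∈ SK.center) (z : L') : SL'.bracket (SL'.alpha w) z = 0 := by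
  obtain ⟨-, hτ, -, hsurj, -, hker⟩ := h
  have hρ := SL'.rho_alpha_eq_zero hφ (hτ.rho_eq_zero_of_mem_center hw)
  have htop : SL'.centralizer (SL'.alpha w) hρ = ⊤ :=
    hτ.eq_top_of_isPerfect hsurj hperf
      (fun c hc => HLR.bracket_eq_zero_of_mem_center_right (hker hc) _)
      (hτ.bracket_alpha_bracket_eq_zero hker (HLR.bracket_eq_zero_of_mem_center_left hw))
  exact Submodule.eq_top_iff'.mp htop z

end HLRLemmas

/-- the composition of two central extensions (the middle algebra being perfect)
is an `α`-central extension, provided `φ` is surjective. -/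
theorem statement_5
    {R A : Type} [CommRing R] [CommRing A] [Algebra R A] (φ : A →ₐ[R] A)
    (hφ : Function.Surjective ⇑φ)
    {M K L N L' : Type}
    [AddCommGroup M] [Module R M] [Module A M] [IsScalarTower R A M]
    [AddCommGroup K] [Module R K] [Module A K] [IsScalarTower R A K]
    [AddCommGroup L] [Module R L] [Module A L] [IsScalarTower R A L]
    [AddCommGroup N] [Module R N] [Module A N] [IsScalarTower R A N]
    [AddCommGroup L'] [Module R L'] [Module A L'] [IsScalarTower R A L']
    (SM : HLR R A φ M) (SK : HLR R A φ K) (SL : HLR R A φ L)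
    (SN : HLR R A φ N) (SL' : HLR R A φ L')
    (i : M → K) (σ : K → L) (j : N → L') (τ : L' → K)
    (h1 : IsCentralExt SM SK SL i σ) (hperf : SK.IsPerfect)
    (h2 : IsCentralExt SN SL' SK j τ) :
    IsHLRHom SL' SL (fun x => σ (τ x)) ∧
    Function.Surjective (fun x => σ (τ x)) ∧
    ∀ x : L', σ (τ x) = 0 → SL'.alpha x ∈ SL'.center := by
  obtain ⟨-, hσ, -, hσsurj, -, hkerσ⟩ := h1
  have hστ := hσ.comp h2.2.1
  have στ_smul : ∀ (b : A) y, σ (τ (b • y)) = b • σ (τ y) := hστ.2.1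
  have στ_alpha : ∀ y, σ (τ (SL'.alpha y)) = SL.alpha (σ (τ y)) := hστ.2.2.2.1
  refine ⟨hστ, hσsurj.comp h2.2.2.2.1, fun x hx a z => ?_⟩
  obtain ⟨b, rfl⟩ := hφ a
  have hbx : σ (τ (b • x)) = 0 := by rw [στ_smul, hx, smul_zero]
  have hbαx : σ (τ (b • SL'.alpha x)) = 0 := by
    rw [στ_smul, στ_alpha, hx, SL.alpha_zero, smul_zero]
  refine ⟨?_, ?_, ?_⟩
  · rw [← SL'.alpha_smulA]
    exact h2.bracket_alpha_eq_zero hφ hperf (hkerσ hbx) z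
  · rw [← SL'.alpha_smulA]
    exact h2.bracket_alpha_eq_zero hφ hperf (hkerσ hbαx) z
  · rw [SL'.rho_alpha, h2.2.1.rho_eq_zero_of_mem_center (hkerσ hx), map_zero]
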